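/- Let 𝒴 = ℝ^m, 𝒰 = ℝ^d, ν a probability measure on 𝒴 × 𝒰 with 𝒴-marginal ν_𝒴, η_𝒰 a probability measure on 𝒰, and η = ν_𝒴 ⊗ η_𝒰. Let T(y,u) = (y, T_𝒰(y,u)) be a measurable block-triangular map with T_𝒰 : 𝒴 × 𝒰 → 𝒰. If T#η = ν, then for ν_𝒴-almost every y ∈ 𝒴, T_𝒰(y,·)#η_𝒰 equals the conditional distribution ν(·|y) of the second component given the first. -/

import Mathlib

/-!
Pushing `ν_𝒴 ⊗ η_𝒰` forward by the triangular map `(y, u) ↦ (y, T_𝒰(y, u))` gives the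
composition-product `ν_𝒴 ⊗ κ` with the kernel `κ y = T_𝒰(y, ·)#η_𝒰`. Hence `ν = ν_𝒴 ⊗ κ`, and
the disintegration of `ν` along its first marginal is unique up to `ν_𝒴`-null sets.
-/

open MeasureTheory ProbabilityTheory Function

variable {α β γ : Type*} [MeasurableSpace α] [MeasurableSpace β] [MeasurableSpace γ]

lemma ProbabilityTheory.Kernel.map_id_prod_const_apply (η : Measure β) [SFinite η]
    {f : α → β → γ} (hf : Measurable (uncurry f)) (a : α) :
    (Kernel.id ×ₖ Kernel.const α η).map (uncurry f) a = η.map (f a) := by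
  rw [Kernel.map_apply _ hf, Kernel.prod_apply, Kernel.id_apply, Kernel.const_apply,
    Measure.dirac_prod, Measure.map_map hf measurable_prodMk_left]
  rfl

lemma MeasureTheory.Measure.map_prod_prodMk_eq_compProd (μ : Measure α) [SFinite μ]
    (η : Measure β) [SFinite η] {f : α → β → γ} (hf : Measurable (uncurry f)) :
    (μ.prod η).map (fun p => (p.1, f p.1 p.2)) =
      μ ⊗ₘ (Kernel.id ×ₖ Kernel.const α η).map (uncurry f) := by
  have hg : Measurable fun p : α × β => (p.1, f p.1 p.2) := measurable_fst.prodMk hf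
  ext s hs
  rw [Measure.compProd_apply hs, Measure.map_apply hg hs, Measure.prod_apply (hg hs)]
  refine lintegral_congr fun a => ?_
  rw [Kernel.map_id_prod_const_apply η hf, Measure.map_apply hf.of_uncurry_left
    (measurable_prodMk_left hs)]
  rfl

theorem MeasureTheory.Measure.condKernel_ae_eq_map_of_map_prod_eq
    {Ω : Type*} [MeasurableSpace Ω] [StandardBorelSpace Ω] [Nonempty Ω]
    (ρ : Measure (α × Ω)) [IsFiniteMeasure ρ] (η : Measure β) [IsFiniteMeasure η]
    {f : α → β → Ω} (hf : Measurable (uncurry f))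
    (hρ : (ρ.fst.prod η).map (fun p => (p.1, f p.1 p.2)) = ρ) :
    ∀ᵐ a ∂ρ.fst, η.map (f a) = ρ.condKernel a := by
  rw [Measure.map_prod_prodMk_eq_compProd _ _ hf] at hρ
  filter_upwards [eq_condKernel_of_measure_eq_compProd _ hρ.symm] with a ha
  rw [← ha, Kernel.map_id_prod_const_apply η hf]

/-- Let `𝒴 = ℝ^m`, `𝒰 = ℝ^d`, `ν` a probability measure on `𝒴 × 𝒰`
with `𝒴`-marginal `ν_𝒴 = ν.fst`, `η_𝒰` a probability measure on `𝒰`, and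
`η = ν_𝒴 ⊗ η_𝒰`. If the block-triangular map `T(y,u) = (y, T_𝒰(y,u))` pushes `η`
forward to `ν`, then for `ν_𝒴`-a.e. `y`, `T_𝒰(y,·)#η_𝒰` equals the conditional
distribution `ν(·|y)` (the disintegration kernel `ν.condKernel`). -/
theorem stmt12_triangular_map_conditional
    {m d : ℕ}
    (ν : Measure (EuclideanSpace ℝ (Fin m) × EuclideanSpace ℝ (Fin d)))
    [IsProbabilityMeasure ν]
    (ηU : Measure (EuclideanSpace ℝ (Fin d))) [IsProbabilityMeasure ηU]
    (TU : EuclideanSpace ℝ (Fin m) → EuclideanSpace ℝ (Fin d) →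
      EuclideanSpace ℝ (Fin d))
    (hTU : Measurable (fun p : EuclideanSpace ℝ (Fin m) × EuclideanSpace ℝ (Fin d) =>
      TU p.1 p.2))
    (hpush : (ν.fst.prod ηU).map
      (fun p : EuclideanSpace ℝ (Fin m) × EuclideanSpace ℝ (Fin d) =>
        (p.1, TU p.1 p.2)) = ν) :
    ∀ᵐ y ∂ν.fst, ηU.map (TU y) = ν.condKernel y :=
  Measure.condKernel_ae_eq_map_of_map_prod_eq ν ηU hTU hpush
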